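/- Second product bound: with b=7/6, p_j as above, and ε ∈ (0,1), there exist constants c, c₇ > 0 independent of j and ε such that (∏_{i=1}^{j} (1 + i²/ε)^{b^{j-i+1}})^{1/p_j} ≤ c/ε^{c₇} for all j ≥ 1. -/

import Mathlib

/-!
Take logarithms. Since `1 + i² ≤ exp (2 i)`, each factor contributes at most
`b ^ (j - i + 1) (2 i + log (1/ε))`. Writing `b ^ (j - i + 1) = b ^ (j + 1) b⁻¹ ^ i`, the sums of
`i b⁻¹ ^ i` and `b⁻¹ ^ i` are bounded by their convergent series, so the logarithm of the product is
`O(b ^ j (1 + log (1/ε)))`, while `p j ≥ 2 b ^ (j - 1)`.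
-/

open Finset Real

lemma sum_pow_le_of_lt_one {r : ℝ} (hr₀ : 0 ≤ r) (hr₁ : r < 1) (s : Finset ℕ) :
    ∑ i ∈ s, r ^ i ≤ (1 - r)⁻¹ :=
  sum_le_hasSum s (fun i _ => pow_nonneg hr₀ i) (hasSum_geometric_of_lt_one hr₀ hr₁)

lemma sum_coe_mul_pow_le_of_lt_one {r : ℝ} (hr₀ : 0 ≤ r) (hr₁ : r < 1) (s : Finset ℕ) :
    ∑ i ∈ s, (i : ℝ) * r ^ i ≤ r / (1 - r) ^ 2 :=
  sum_le_hasSum s (fun i _ => by positivity)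
    (hasSum_coe_mul_geometric_of_norm_lt_one (by rwa [norm_of_nonneg hr₀]))

lemma sum_Icc_pow_sub_mul_le {b α β : ℝ} (hb : 1 < b) (hα : 0 ≤ α) (hβ : 0 ≤ β) (j : ℕ) :
    ∑ i ∈ Icc 1 j, b ^ (j - i + 1) * (α * i + β)
      ≤ b ^ (j + 1) * (α * b / (b - 1) ^ 2 + β * b / (b - 1)) := by
  have hr₀ : 0 ≤ b⁻¹ := inv_nonneg.2 (by linarith)
  have hr₁ : b⁻¹ < 1 := inv_lt_one_of_one_lt₀ hb
  have hpow : ∀ i ∈ Icc 1 j, b ^ (j - i + 1) = b ^ (j + 1) * b⁻¹ ^ i := fun i hi => by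
    rw [← Nat.sub_add_comm (mem_Icc.1 hi).2, pow_sub₀ _ (by positivity) (by grind), inv_pow]
  calc ∑ i ∈ Icc 1 j, b ^ (j - i + 1) * (α * i + β)
      = b ^ (j + 1) * (α * ∑ i ∈ Icc 1 j, (i : ℝ) * b⁻¹ ^ i + β * ∑ i ∈ Icc 1 j, b⁻¹ ^ i) := by
        rw [mul_sum, mul_sum, ← sum_add_distrib, mul_sum]
        exact sum_congr rfl fun i hi => by rw [hpow i hi]; ring
    _ ≤ b ^ (j + 1) * (α * (b⁻¹ / (1 - b⁻¹) ^ 2) + β * (1 - b⁻¹)⁻¹) := by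
        gcongr
        · exact sum_coe_mul_pow_le_of_lt_one hr₀ hr₁ _
        · exact sum_pow_le_of_lt_one hr₀ hr₁ _
    _ = b ^ (j + 1) * (α * b / (b - 1) ^ 2 + β * b / (b - 1)) := by
        have : b - 1 ≠ 0 := by linarith
        field_simp

lemma log_one_add_sq_div_le {x ε : ℝ} (hx : 0 ≤ x) (hε₀ : 0 < ε) (hε₁ : ε ≤ 1) :
    log (1 + x ^ 2 / ε) ≤ 2 * x - log ε := by
  have hsq : 1 + x ^ 2 ≤ exp (2 * x) :=
    calc 1 + x ^ 2 ≤ (x + 1) ^ 2 := by nlinarith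
      _ ≤ exp x ^ 2 := by gcongr; exact add_one_le_exp x
      _ = exp (2 * x) := by rw [← exp_nat_mul]; norm_num
  have h : 1 + x ^ 2 / ε ≤ exp (2 * x) / ε := by
    rw [le_div_iff₀ hε₀, add_mul, div_mul_cancel₀ _ hε₀.ne']
    linarith
  calc log (1 + x ^ 2 / ε) ≤ log (exp (2 * x) / ε) := log_le_log (by positivity) h
    _ = 2 * x - log ε := by rw [log_div (exp_pos _).ne' hε₀.ne', log_exp]

lemma pow_sub_one_mul_le_of_mul_le_succ {b : ℝ} {p : ℕ → ℝ} (hb : 0 ≤ b)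
    (h : ∀ j, 1 ≤ j → b * p j ≤ p (j + 1)) {j : ℕ} (hj : 1 ≤ j) :
    b ^ (j - 1) * p 1 ≤ p j := by
  induction j, hj using Nat.le_induction with
  | base => simp
  | succ n hn ih =>
    calc b ^ (n + 1 - 1) * p 1 = b * (b ^ (n - 1) * p 1) := by
          rw [Nat.add_sub_cancel, ← Nat.sub_add_cancel hn, pow_succ]; simp; ring
      _ ≤ b * p n := by gcongr
      _ ≤ p (n + 1) := h n hn

lemma sum_pow_sub_mul_log_one_add_sq_div_le {b ε : ℝ} (hb : 1 < b) (hε₀ : 0 < ε) (hε₁ : ε ≤ 1)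
    (j : ℕ) :
    ∑ i ∈ Icc 1 j, b ^ (j - i + 1) * log (1 + (i : ℝ) ^ 2 / ε)
      ≤ b ^ (j + 1) * (2 * b / (b - 1) ^ 2 + -log ε * b / (b - 1)) :=
  calc _ ≤ ∑ i ∈ Icc 1 j, b ^ (j - i + 1) * (2 * i + -log ε) :=
        sum_le_sum fun i _ => mul_le_mul_of_nonneg_left
          (by linarith [log_one_add_sq_div_le i.cast_nonneg hε₀ hε₁]) (by positivity)
    _ ≤ _ := sum_Icc_pow_sub_mul_le hb zero_le_two (neg_nonneg.2 (log_nonpos hε₀.le hε₁)) j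

lemma log_prod_rpow_rpow {ι : Type*} {s : Finset ι} {x : ι → ℝ} (hx : ∀ i ∈ s, 0 < x i)
    (w : ι → ℝ) (q : ℝ) :
    log ((∏ i ∈ s, x i ^ w i) ^ q) = q * ∑ i ∈ s, w i * log (x i) := by
  rw [log_rpow (prod_pos fun i hi => rpow_pos_of_pos (hx i hi) _),
    log_prod fun i hi => (rpow_pos_of_pos (hx i hi) _).ne',
    sum_congr rfl fun i hi => log_rpow (hx i hi) _]

/-- Second product bound:
`(∏_{i=1}^j (1+i²/ε)^{b^{j-i+1}})^{1/p_j} ≤ c/ε^{c₇}` with `b = 7/6`. -/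
theorem iteration_product_bound_eps
    (p : ℕ → ℝ) (hp1 : p 1 = 2) (hrec : ∀ j : ℕ, 1 ≤ j → p (j + 1) = 7 / 6 * p j + 1) :
    ∃ c c₇ : ℝ, 0 < c ∧ 0 < c₇ ∧
      ∀ ε : ℝ, 0 < ε → ε < 1 → ∀ j : ℕ, 1 ≤ j →
        (∏ i ∈ Finset.Icc 1 j, (1 + (i : ℝ) ^ 2 / ε) ^ ((7 / 6 : ℝ) ^ (j - i + 1))) ^ (1 / p j)
          ≤ c / ε ^ c₇ := by
  refine ⟨exp 58, 5, exp_pos _, by norm_num, fun ε hε₀ hε₁ j hj => ?_⟩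
  have hp : (7 / 6 : ℝ) ^ (j - 1) * 2 ≤ p j := by
    simpa [hp1] using pow_sub_one_mul_le_of_mul_le_succ (b := 7 / 6) (p := p) (by norm_num)
      (fun j hj => by rw [hrec j hj]; linarith) hj
  have hp₀ : 0 < p j := lt_of_lt_of_le (by positivity) hp
  have hsum := sum_pow_sub_mul_log_one_add_sq_div_le (b := 7 / 6) (by norm_num) hε₀ hε₁.le j
  have hlogε : log ε ≤ 0 := log_nonpos hε₀.le hε₁.le
  rw [← log_le_log_iff (by positivity) (by positivity),
    log_prod_rpow_rpow (fun i _ => by positivity), log_div (exp_pos _).ne' (by positivity),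
    log_exp, log_rpow hε₀]
  calc 1 / p j * ∑ i ∈ Icc 1 j, (7 / 6 : ℝ) ^ (j - i + 1) * log (1 + (i : ℝ) ^ 2 / ε)
      ≤ 1 / p j * ((7 / 6 : ℝ) ^ (j + 1) * (84 + 7 * -log ε)) := by
        gcongr
        norm_num at hsum
        linarith
    _ ≤ 1 / ((7 / 6 : ℝ) ^ (j - 1) * 2) * ((7 / 6 : ℝ) ^ (j + 1) * (84 + 7 * -log ε)) := by
        gcongr
        exact mul_nonneg (by positivity) (by linarith)
    _ = 49 / 72 * (84 + 7 * -log ε) := by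
        rw [← Nat.sub_add_cancel hj, Nat.add_sub_cancel, pow_add _ (j - 1 + 1)]
        field_simp
        ring
    _ ≤ 58 - 5 * log ε := by linarith
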